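/- arXiv:1212.5646 — 4 statements merged into one kernel-verified Lean document; each statement's English description precedes it below -/
import Mathlib

section
/- Let n ≥ 1 and let τ be a fixed-point-free involution of ZMod (2n) (a chord diagram with n chords). Then the number of cycles (orbits) of the surgery permutation p : ZMod (2n) → ZMod (2n), p(i) = τ(i+1), equals 1 + n − rank(M(τ)), where rank(M(τ)) is the rank over ZMod 2 of the interlacement matrix of τ. (This is the Circuit-Nullity Theorem: the number of circles obtained from a chord diagram by surgery along all chords is one plus the corank of its chord-by-chord intersection matrix.) -/
/-- The setoid on `β` whose classes are the cycles (orbits) of the permutation `p`. -/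
def sameCycleSetoid {β : Type*} (p : Equiv.Perm β) : Setoid β where
  r := p.SameCycle
  iseqv := ⟨fun x => Equiv.Perm.SameCycle.refl p x,
    fun h => h.symm, fun h₁ h₂ => h₁.trans h₂⟩

/-- The number of cycles (orbits, including fixed points) of a permutation. -/
noncomputable def cycleCount {β : Type*} (p : Equiv.Perm β) : ℕ :=
  Nat.card (Quotient (sameCycleSetoid p))

/-- `c` lies strictly inside the arc going from `a` (in the positive cyclic direction)
to `τ a`: starting at `a` and moving positively, one reaches `c` strictly before `τ a`. -/
def StrictlyInsideArc {N : ℕ} (τ : Equiv.Perm (ZMod N)) (a c : ZMod N) : Prop :=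
  0 < (c - a).val ∧ (c - a).val < (τ a - a).val

/-- The chords of `τ` through `a` and through `b` have disjoint endpoint sets and are
linked: exactly one of `b`, `τ b` lies strictly inside the arc of `a`. -/
def LinkedAt {N : ℕ} (τ : Equiv.Perm (ZMod N)) (a b : ZMod N) : Prop :=
  b ≠ a ∧ b ≠ τ a ∧ τ b ≠ a ∧ τ b ≠ τ a ∧
    Xor' (StrictlyInsideArc τ a b) (StrictlyInsideArc τ a (τ b))

open Classical in
/-- The interlacement (intersection) matrix of the chord diagram `τ`, as a matrix
over `ZMod 2` indexed by the points of the circle. -/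
noncomputable def interMatrix {N : ℕ} (τ : Equiv.Perm (ZMod N)) :
    Matrix (ZMod N) (ZMod N) (ZMod 2) :=
  Matrix.of fun a b => if LinkedAt τ a b then (1 : ZMod 2) else 0

/-!
Think of `v : ZMod (2 * n) → ZMod 2` as a colouring of the points. Row `a` of the interlacement
matrix sums `v c + v (τ c)` over the points `c` strictly inside the arc from `a` to `τ a`. Since
`v + v ∘ τ` has total sum zero, it is a discrete derivative `c ↦ g (c + 1) - g c`, and the row
telescopes to `g (τ a) - g (a + 1)`. Hence `v` lies in the kernel exactly when `v = e + g` with `e`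
constant on the chords and `g` constant on the cycles of `c ↦ τ c + 1`, a conjugate of the surgery
permutation. These two spaces have dimensions `n` and the number of circles, and they meet in the
constants, so the kernel has dimension `n + #circles - 1`; rank–nullity on the `2n` points gives
the theorem.
-/

open Finset Function Module

namespace Equiv.Perm

variable {β : Type*}

section FixedFunctions

variable (R : Type*) [Semiring R] (g : Perm β)

def fixedFunctions : Submodule R (β → R) where
  carrier := {f | ∀ x, f (g x) = f x}
  add_mem' hf hf' x := by simp only [Pi.add_apply, hf x, hf' x]
  zero_mem' _ := rfl
  smul_mem' c f hf x := by simp only [Pi.smul_apply, hf x]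

variable {R g}

theorem mem_fixedFunctions {f : β → R} : f ∈ fixedFunctions R g ↔ ∀ x, f (g x) = f x :=
  Iff.rfl

theorem one_mem_fixedFunctions : (1 : β → R) ∈ fixedFunctions R g := fun _ => rfl

theorem apply_zpow_apply_of_mem_fixedFunctions {f : β → R} (hf : f ∈ fixedFunctions R g)
    (i : ℤ) (x : β) : f ((g ^ i) x) = f x := by
  induction i using Int.induction_on generalizing x with
  | zero => rfl
  | succ i ih => rw [zpow_add_one, mul_apply, ih, hf]
  | pred i ih =>
    rw [zpow_sub_one, mul_apply, ih]
    simpa using (hf (g⁻¹ x)).symm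

theorem SameCycle.apply_eq_of_mem_fixedFunctions {f : β → R} (hf : f ∈ fixedFunctions R g)
    {x y : β} (h : g.SameCycle x y) : f x = f y := by
  obtain ⟨i, rfl⟩ := h
  exact (apply_zpow_apply_of_mem_fixedFunctions hf i x).symm

theorem fixedFunctions_inf_fixedFunctions_mul (g h : Perm β) :
    fixedFunctions R g ⊓ fixedFunctions R (h * g) =
      fixedFunctions R g ⊓ fixedFunctions R h := by
  ext f
  simp only [Submodule.mem_inf, mem_fixedFunctions, mul_apply, and_congr_right_iff]
  refine fun hf => ⟨fun H y => ?_, fun H x => by rw [H, hf]⟩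
  obtain ⟨x, rfl⟩ := g.surjective y
  rw [H x, hf x]

theorem range_funLeft_mk_eq_fixedFunctions :
    LinearMap.range (LinearMap.funLeft R R (Quotient.mk (sameCycleSetoid g))) =
      fixedFunctions R g := by
  ext f
  constructor
  · rintro ⟨φ, rfl⟩ x
    exact congrArg φ (Quotient.sound (SameCycle.refl g x).apply_left)
  · intro hf
    exact ⟨Quotient.lift f fun _ _ h => h.apply_eq_of_mem_fixedFunctions hf, rfl⟩

theorem finrank_fixedFunctions [Finite β] (R : Type*) [Semiring R] [StrongRankCondition R]
    (g : Perm β) : finrank R (fixedFunctions R g) = cycleCount g := by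
  have hinj := LinearMap.funLeft_injective_of_surjective R R _
    (Quotient.mk_surjective (s := sameCycleSetoid g))
  have := Fintype.ofFinite (Quotient (sameCycleSetoid g))
  rw [← range_funLeft_mk_eq_fixedFunctions, LinearMap.finrank_range_of_inj hinj,
    Module.finrank_pi, cycleCount, Nat.card_eq_fintype_card]

end FixedFunctions

theorem cycleCount_conj (g h : Perm β) : cycleCount (h * g * h⁻¹) = cycleCount g :=
  Nat.card_congr (Quotient.congr h.symm fun _ _ => sameCycle_conj)

theorem cycleCount_mul_comm (g h : Perm β) : cycleCount (g * h) = cycleCount (h * g) := by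
  rw [← cycleCount_conj (g * h) h, mul_assoc, mul_inv_cancel_right]

theorem sameCycle_iff_of_involutive [Finite β] {g : Perm β} (hg : Involutive g) {x y : β} :
    g.SameCycle x y ↔ y = x ∨ y = g x := by
  refine ⟨fun h => ?_, ?_⟩
  · obtain ⟨k, rfl⟩ := h.exists_nat_pow_eq
    rw [coe_pow]
    rcases Nat.even_or_odd k with hk | hk
    · exact .inl (congrFun (hg.iterate_even hk) x)
    · exact .inr (congrFun (hg.iterate_odd hk) x)
  · rintro (rfl | rfl)
    exacts [SameCycle.refl g y, (SameCycle.refl g x).apply_right]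

theorem two_mul_cycleCount_of_involutive [Fintype β] {g : Perm β} (hg : Involutive g)
    (hfp : ∀ x, g x ≠ x) : 2 * cycleCount g = Fintype.card β := by
  classical
  let mk := Quotient.mk (sameCycleSetoid g)
  have hfiber (q : Quotient (sameCycleSetoid g)) : Fintype.card {x // mk x = q} = 2 := by
    obtain ⟨x, rfl⟩ := q.exists_rep
    have hclass (y : β) : mk y = mk x ↔ y ∈ ({x, g x} : Finset β) := by
      rw [Finset.mem_insert, Finset.mem_singleton, ← sameCycle_iff_of_involutive hg]
      exact Quotient.eq.trans ⟨SameCycle.symm, SameCycle.symm⟩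
    rw [Fintype.card_congr (Equiv.subtypeEquivRight hclass), Fintype.card_coe,
      Finset.card_pair (hfp x).symm]
  have := Fintype.ofFinite (Quotient (sameCycleSetoid g))
  calc 2 * cycleCount g = ∑ q, Fintype.card {x // mk x = q} := by
        simp [hfiber, cycleCount, Nat.card_eq_fintype_card, mul_comm]
    _ = Fintype.card β := by
        rw [← Fintype.card_sigma]; exact Fintype.card_congr (Equiv.sigmaFiberEquiv mk)

end Equiv.Perm

open Equiv.Perm

namespace ZMod

variable {N : ℕ}

theorem fixedFunctions_addRight_one (R : Type*) [Semiring R] :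
    fixedFunctions R (Equiv.addRight (1 : ZMod N)) = R ∙ 1 := by
  ext f
  rw [mem_fixedFunctions, Submodule.mem_span_singleton]
  refine ⟨fun hf => ?_, fun ⟨r, hr⟩ _ => by simp [← hr]⟩
  simp only [Equiv.coe_addRight] at hf
  have hconst (k : ℤ) : f k = f 0 := by
    induction k using Int.induction_on with
    | zero => simp
    | succ k ih => rw [← ih, Int.cast_add, Int.cast_one, hf]
    | pred k ih => rw [← ih, ← hf, Int.cast_sub, Int.cast_one, sub_add_cancel]
  refine ⟨f 0, funext fun c => ?_⟩
  obtain ⟨k, rfl⟩ := intCast_surjective c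
  simp [hconst]

variable [NeZero N]

def arc (a b : ZMod N) : Finset (ZMod N) :=
  {c | 0 < (c - a).val ∧ (c - a).val < (b - a).val}

theorem sum_arc_sub {M : Type*} [AddCommGroup M] {a b : ZMod N} (hab : a ≠ b)
    (g : ZMod N → M) : ∑ c ∈ arc a b, (g (c + 1) - g c) = g b - g (a + 1) := by
  have hm : 1 ≤ (b - a).val := Nat.one_le_iff_ne_zero.2 <| by
    rwa [Ne, val_eq_zero, sub_eq_zero, eq_comm]
  have hval {j : ℕ} (hj : j < (b - a).val) : ((j : ZMod N)).val = j :=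
    val_cast_of_lt (hj.trans (val_lt _))
  calc ∑ c ∈ arc a b, (g (c + 1) - g c)
      = ∑ j ∈ Ico 1 (b - a).val, (g (a + (j + 1 : ℕ)) - g (a + j)) := by
        refine (sum_nbij' (fun j : ℕ => a + j) (fun c => (c - a).val) ?_ ?_ ?_ ?_ ?_).symm
        · intro j hj
          rw [mem_Ico] at hj
          simp only [arc, mem_filter, mem_univ, true_and, add_sub_cancel_left, hval hj.2]
          omega
        · intro c hc
          simp only [arc, mem_filter, mem_univ, true_and] at hc
          rw [mem_Ico]
          omega
        · intro j hj
          rw [add_sub_cancel_left, hval (mem_Ico.1 hj).2]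
        · intro c _
          simp
        · intro j _
          simp [add_assoc]
    _ = g b - g (a + 1) := by
        rw [sum_Ico_sub (fun j : ℕ => g (a + j)) hm]
        simp

theorem exists_apply_add_one_sub_eq {M : Type*} [AddCommGroup M] (d : ZMod N → M)
    (hd : ∑ c, d c = 0) : ∃ g : ZMod N → M, ∀ c, g (c + 1) - g c = d c := by
  refine ⟨fun c => ∑ x ∈ {x | x.val < c.val}, d x, fun c => ?_⟩
  have hc1 : c + 1 = ((c.val + 1 : ℕ) : ZMod N) := by simp
  by_cases hlt : c.val + 1 < N
  · have hfilter : univ.filter (fun x : ZMod N => x.val < (c + 1).val) =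
        insert c (univ.filter fun x : ZMod N => x.val < c.val) := by
      ext x
      rw [hc1, val_cast_of_lt hlt]
      simp only [mem_filter, mem_univ, true_and, mem_insert, Nat.lt_succ_iff_lt_or_eq,
        (val_injective N).eq_iff, or_comm]
    simp only [hfilter, sum_insert (by simp : c ∉ univ.filter fun x : ZMod N => x.val < c.val),
      add_sub_cancel_right]
  · have hc : c + 1 = 0 := by
      rw [hc1, show c.val + 1 = N by have := val_lt c; omega, natCast_self]
    have hfilter : univ.filter (fun x : ZMod N => x.val < c.val) = univ.erase c := by
      ext x
      simp only [mem_filter, mem_univ, true_and, mem_erase, and_true, ne_eq,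
        ← (val_injective N).eq_iff]
      have := val_lt x
      omega
    simp [hc, hfilter, sum_erase_eq_sub, hd]

end ZMod

open ZMod Matrix

variable {N : ℕ} [NeZero N] {τ : Equiv.Perm (ZMod N)}

theorem strictlyInsideArc_iff_mem_arc {a c : ZMod N} :
    StrictlyInsideArc τ a c ↔ c ∈ arc a (τ a) := by
  simp [StrictlyInsideArc, arc]

theorem interMatrix_apply (hτ : Involutive τ) (a b : ZMod N) :
    interMatrix τ a b =
      (if b ∈ arc a (τ a) then 1 else 0) + (if τ b ∈ arc a (τ a) then 1 else 0) := by
  have ha : a ∉ arc a (τ a) := by simp [arc]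
  have hτa : τ a ∉ arc a (τ a) := by simp [arc]
  rcases eq_or_ne b a with rfl | hba
  · simp [interMatrix, LinkedAt, ha, hτa]
  rcases eq_or_ne b (τ a) with rfl | hbτ
  · simp [interMatrix, LinkedAt, ha, hτa, hτ a]
  have hτba : τ b ≠ a := fun h => hbτ (h ▸ (hτ b).symm)
  have hτbτ : τ b ≠ τ a := τ.injective.ne hba
  have hlink : LinkedAt τ a b ↔ Xor (b ∈ arc a (τ a)) (τ b ∈ arc a (τ a)) := by
    simp only [LinkedAt, strictlyInsideArc_iff_mem_arc, ne_eq, hba, hbτ, hτba, hτbτ,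
      not_false_eq_true, true_and]
    rfl
  classical
  simp only [interMatrix, Matrix.of_apply, hlink]
  by_cases hb : b ∈ arc a (τ a) <;> by_cases hτb : τ b ∈ arc a (τ a) <;>
    simp [hb, hτb, CharTwo.add_self_eq_zero]

theorem interMatrix_mulVec_apply (hτ : Involutive τ) (v : ZMod N → ZMod 2) (a : ZMod N) :
    (interMatrix τ *ᵥ v) a = ∑ c ∈ arc a (τ a), (v c + v (τ c)) := by
  calc (interMatrix τ *ᵥ v) a
      = ∑ b, ((if b ∈ arc a (τ a) then v b else 0) +
          (if τ b ∈ arc a (τ a) then v b else 0)) := by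
        simp [Matrix.mulVec, dotProduct, interMatrix_apply hτ, add_mul]
    _ = ∑ c ∈ arc a (τ a), v c + ∑ c ∈ arc a (τ a), v (τ c) := by
        rw [sum_add_distrib,
          ← Equiv.sum_comp τ (fun b => if τ b ∈ arc a (τ a) then v b else 0)]
        simp [hτ _, sum_ite_mem]
    _ = _ := sum_add_distrib.symm

theorem interMatrix_mulVec_apply_eq_sub (hτ : Involutive τ) (hfp : ∀ a, τ a ≠ a)
    {v g : ZMod N → ZMod 2} (hg : ∀ c, g (c + 1) - g c = v c + v (τ c)) (a : ZMod N) :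
    (interMatrix τ *ᵥ v) a = g (τ a) - g (a + 1) := by
  rw [interMatrix_mulVec_apply hτ, ← sum_arc_sub (hfp a).symm]
  simp only [hg]

theorem ker_mulVecLin_interMatrix (hτ : Involutive τ) (hfp : ∀ a, τ a ≠ a) :
    LinearMap.ker (interMatrix τ).mulVecLin =
      fixedFunctions (ZMod 2) τ ⊔ fixedFunctions (ZMod 2) (Equiv.addRight 1 * τ) := by
  ext v
  simp only [LinearMap.mem_ker, mulVecLin_apply, funext_iff, Pi.zero_apply]
  constructor
  · intro hv
    obtain ⟨g, hg⟩ := exists_apply_add_one_sub_eq (fun c => v c + v (τ c)) <| by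
      rw [sum_add_distrib, Equiv.sum_comp τ v, CharTwo.add_self_eq_zero]
    have hgτ (a : ZMod N) : g (τ a) = g (a + 1) := by
      rw [← sub_eq_zero, ← interMatrix_mulVec_apply_eq_sub hτ hfp hg, hv]
    refine Submodule.mem_sup.2 ⟨v - g, fun b => ?_, g, fun z => ?_, sub_add_cancel v g⟩
    · simp only [Pi.sub_apply]
      linear_combination (norm := (ring_nf; reduce_mod_char)) hgτ b - hg b
    · rw [mul_apply, Equiv.coe_addRight, ← hgτ, hτ]
  · intro hv
    obtain ⟨e, he, y, hy, rfl⟩ := Submodule.mem_sup.1 hv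
    intro a
    have he' : (interMatrix τ *ᵥ e) a = 0 := by
      rw [interMatrix_mulVec_apply_eq_sub hτ hfp (g := fun _ => 0), sub_self]
      intro c
      rw [he c, CharTwo.add_self_eq_zero, sub_self]
    have hy₁ (c : ZMod N) : y (c + 1) = y (τ c) := by simpa [hτ c] using hy (τ c)
    have hy' : (interMatrix τ *ᵥ y) a = 0 := by
      rw [interMatrix_mulVec_apply_eq_sub hτ hfp (g := y), hy₁, sub_self]
      intro c
      rw [hy₁, CharTwo.sub_eq_add, add_comm]
    rw [mulVec_add, Pi.add_apply, he', hy', add_zero]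

/-- **Circuit-Nullity Theorem.** For a chord diagram with `n` chords, modelled as a
fixed-point-free involution `τ` of `ZMod (2*n)`, the number of cycles of the surgery
permutation `p i = τ (i + 1)` equals `1 + n - rank (M τ)`, where the rank of the
interlacement matrix is taken over `ZMod 2`. -/
theorem circuit_nullity (n : ℕ) [NeZero n] (τ : Equiv.Perm (ZMod (2 * n)))
    (hinv : Function.Involutive τ) (hfp : ∀ i, τ i ≠ i) :
    cycleCount (τ * Equiv.addRight (1 : ZMod (2 * n))) =
      1 + n - (interMatrix τ).rank := by
  have : NeZero (2 * n) := ⟨mul_ne_zero two_ne_zero (NeZero.ne n)⟩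
  have hrank := (interMatrix τ).mulVecLin.finrank_range_add_finrank_ker
  rw [ker_mulVecLin_interMatrix hinv hfp, finrank_fintype_fun_eq_card, ZMod.card] at hrank
  set E := fixedFunctions (ZMod 2) τ
  set Y := fixedFunctions (ZMod 2) (Equiv.addRight 1 * τ)
  have hE : finrank (ZMod 2) E = n := by
    have := two_mul_cycleCount_of_involutive hinv hfp
    rw [ZMod.card] at this
    rw [finrank_fixedFunctions]
    omega
  have hY : finrank (ZMod 2) Y = cycleCount (τ * Equiv.addRight 1) := by
    rw [finrank_fixedFunctions, cycleCount_mul_comm]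
  have hEY : finrank (ZMod 2) ↥(E ⊓ Y) = 1 := by
    rw [fixedFunctions_inf_fixedFunctions_mul, fixedFunctions_addRight_one,
      inf_eq_right.2 ((Submodule.span_singleton_le_iff_mem _ _).2 one_mem_fixedFunctions),
      finrank_span_singleton one_ne_zero]
  have := Submodule.finrank_sup_add_finrank_inf_eq E Y
  rw [Matrix.rank]
  omega
end

section
/- Let n ≥ 1 and let τ be a fixed-point-free involution of ZMod (2n) (a chord diagram with n chords). The surgery permutation p(i) = τ(i+1) has exactly n + 1 cycles if and only if no two chords of the diagram are linked (equivalently, if and only if the interlacement matrix M(τ) is the zero matrix). -/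
/-!
Surgery along a chord `{x, y}` multiplies the surgery permutation by `swap x y`, and multiplying
a permutation by `swap x y` splits a cycle in two when `x` and `y` lie on the same cycle and
merges two cycles otherwise. Adding the `n` chords one at a time to the single circle
`i ↦ i + 1` therefore produces at most `n + 1` circles. If no two chords are linked, the two
endpoints of each chord lie on a common circle of the surgery along the chords added before it
(nothing crosses the arc between them), so every chord splits and there are exactly `n + 1`
circles. If two chords are linked, the second merges the two circles created by the first, and
at most `n - 1` circles remain.
-/

open Equiv Function Finset

namespace Setoid

variable {α : Type*} [Finite α] {s t : Setoid α}

theorem card_quotient_lt_of_le (hst : s ≤ t) {x y : α} (ht : t x y) (hs : ¬s x y) :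
    Nat.card (Quotient t) < Nat.card (Quotient s) := by
  have hsurj : Surjective (map_of_le hst) := Quotient.ind fun u => ⟨⟦u⟧, rfl⟩
  refine (Nat.card_le_card_of_surjective _ hsurj).lt_of_ne fun hcard => hs ?_
  exact Quotient.exact ((hsurj.bijective_of_nat_card_le hcard.ge).1 (Quotient.sound ht))

/-- By `h`, the classes of `t` are those of `s`, except that the class of `y` may be merged
into another one. -/
theorem card_quotient_le_card_quotient_add_one (hst : s ≤ t) (y : α)
    (h : ∀ u v, t u v → ¬s u y → ¬s v y → s u v) :
    Nat.card (Quotient s) ≤ Nat.card (Quotient t) + 1 := by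
  classical
  let f : Quotient s → Option (Quotient t) := fun q =>
    if q = ⟦y⟧ then none else some (map_of_le hst q)
  have hf : Injective f := by
    refine Quotient.ind₂ fun u v huv => ?_
    by_cases hu : (⟦u⟧ : Quotient s) = ⟦y⟧ <;> by_cases hv : (⟦v⟧ : Quotient s) = ⟦y⟧ <;>
      simp only [f, hu, hv, if_true, if_false, reduceCtorEq, Option.some.injEq] at huv
    · rw [hu, hv]
    · rw [Quotient.eq] at hu hv
      exact Quotient.sound (h u v (Quotient.exact huv) hu hv)
  simpa [Finite.card_option] using Nat.card_le_card_of_injective f hf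

end Setoid

namespace Equiv.Perm

variable {β : Type*}

theorem SameCycle.mem_of_mapsTo [Finite β] {σ : Perm β} {S : Set β} (hS : Set.MapsTo σ S S)
    {u v : β} (h : σ.SameCycle u v) (hu : u ∈ S) : v ∈ S := by
  obtain ⟨i, -, rfl⟩ := h.exists_pow_eq'
  exact hS.iterate i hu

theorem sameCycleSetoid_le_of_forall [Finite β] {σ π : Perm β}
    (hπ : ∀ w, π.SameCycle w (σ w)) : sameCycleSetoid σ ≤ sameCycleSetoid π := fun u _ h =>
  h.mem_of_mapsTo (S := {w | π.SameCycle u w}) (fun _ hw => hw.trans (hπ _)) (.refl _ _)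

variable [DecidableEq β] {σ : Perm β} {x y : β}

theorem SameCycle.sameCycle_swap_mul_apply (hxy : σ.SameCycle x y) (w : β) :
    σ.SameCycle w ((swap x y * σ) w) := by
  have hw : σ.SameCycle w (σ w) := sameCycle_apply_right.2 (.refl _ _)
  rw [mul_apply, swap_apply_def]
  split_ifs with h₁ h₂
  · exact (h₁ ▸ hw).trans hxy
  · exact (h₂ ▸ hw).trans hxy.symm
  · exact hw

theorem SameCycle.of_swap_mul [Finite β] {u v : β} (hx : ¬σ.SameCycle u x)
    (hy : ¬σ.SameCycle u y) (h : (swap x y * σ).SameCycle u v) : σ.SameCycle u v := by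
  refine h.mem_of_mapsTo (S := {w | σ.SameCycle u w}) (fun w hw => ?_) (.refl _ _)
  have hσw : σ.SameCycle u (σ w) := sameCycle_apply_right.2 hw
  show σ.SameCycle u (swap x y (σ w))
  rwa [swap_apply_of_ne_of_ne (fun h : σ w = x => hx (h ▸ hσw))
    (fun h : σ w = y => hy (h ▸ hσw))]

theorem swap_mul_pow_succ_apply {k : ℕ}
    (hk : ∀ j, 0 < j → j < k → (σ ^ j) y ≠ x ∧ (σ ^ j) y ≠ y) :
    ∀ j < k, ((swap x y * σ) ^ (j + 1)) y = swap x y ((σ ^ (j + 1)) y)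
  | 0, _ => by simp
  | j + 1, hj => by
    obtain ⟨hx, hy⟩ := hk (j + 1) j.succ_pos (by omega)
    rw [pow_succ', mul_apply, swap_mul_pow_succ_apply hk j (by omega),
      swap_apply_of_ne_of_ne hx hy, mul_apply, ← mul_apply σ, ← pow_succ' σ]

theorem sameCycle_swap_mul_of_not_sameCycle [Finite β] (h : ¬σ.SameCycle x y) :
    (swap x y * σ).SameCycle x y := by
  set k := minimalPeriod σ y
  have hk : 0 < k := IsPeriodicPt.minimalPeriod_pos (orderOf_pos σ) <| by
    simp [IsPeriodicPt, IsFixedPt, ← coe_pow, pow_orderOf_eq_one]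
  have hnot : ∀ j, 0 < j → j < k → (σ ^ j) y ≠ x ∧ (σ ^ j) y ≠ y := fun j hj hjk =>
    ⟨fun hx => h (hx ▸ (sameCycle_pow_right.2 (.refl σ y))).symm,
      not_isPeriodicPt_of_pos_of_lt_minimalPeriod hj.ne' hjk⟩
  obtain ⟨m, hm⟩ : ∃ m, k = m + 1 := ⟨k - 1, by omega⟩
  have hσk : (σ ^ (m + 1)) y = y := by rw [← hm, coe_pow]; exact iterate_minimalPeriod
  have hyx : (swap x y * σ).SameCycle y (((swap x y * σ) ^ (m + 1)) y) :=
    sameCycle_pow_right.2 (.refl _ y)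
  rw [swap_mul_pow_succ_apply hnot m (by omega), hσk, swap_apply_right] at hyx
  exact hyx.symm

theorem not_sameCycle_swap_mul_of_sameCycle [Finite β] (hxy : x ≠ y) (h : σ.SameCycle x y) :
    ¬(swap x y * σ).SameCycle x y := by
  classical
  have hex : ∃ k, (σ ^ k) y = x := by
    obtain ⟨i, -, hi⟩ := h.symm.exists_pow_eq'
    exact ⟨i, hi⟩
  set k := Nat.find hex
  have hkx : (σ ^ k) y = x := Nat.find_spec hex
  have hk : 0 < k := Nat.pos_of_ne_zero fun h0 => hxy (by simpa [h0] using hkx.symm)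
  have hnot : ∀ j, 0 < j → j < k → (σ ^ j) y ≠ x ∧ (σ ^ j) y ≠ y := by
    refine fun j hj hjk => ⟨Nat.find_min hex hjk, fun hy => Nat.find_min hex
      (show k - j < k by omega) ?_⟩
    rw [← hy, ← mul_apply, ← pow_add, Nat.sub_add_cancel hjk.le, hkx]
  obtain ⟨m, hm⟩ : ∃ m, k = m + 1 := ⟨k - 1, by omega⟩
  have hper : IsPeriodicPt (swap x y * σ) k y := by
    rw [IsPeriodicPt, IsFixedPt, ← coe_pow, hm, swap_mul_pow_succ_apply hnot m (by omega),
      ← hm, hkx, swap_apply_left]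
  rintro hc
  obtain ⟨i, -, hi⟩ := hc.symm.exists_pow_eq'
  rw [coe_pow, ← hper.iterate_mod_apply, ← coe_pow] at hi
  have hlt := Nat.mod_lt i hk
  rcases Nat.eq_zero_or_pos (i % k) with h0 | hpos
  · rw [h0, pow_zero, one_apply] at hi
    exact hxy hi.symm
  · obtain ⟨j, hj⟩ : ∃ j, i % k = j + 1 := ⟨i % k - 1, by omega⟩
    rw [hj, swap_mul_pow_succ_apply hnot j (by omega), swap_apply_eq_iff, swap_apply_left] at hi
    exact (hnot (j + 1) j.succ_pos (by omega)).2 hi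

theorem cycleCount_swap_mul_lt [Finite β] (h : ¬σ.SameCycle x y) :
    cycleCount (swap x y * σ) < cycleCount σ := by
  have hxy := sameCycle_swap_mul_of_not_sameCycle h
  refine Setoid.card_quotient_lt_of_le (sameCycleSetoid_le_of_forall fun w => ?_) hxy h
  simpa [swap_mul_self_mul] using hxy.sameCycle_swap_mul_apply w

theorem cycleCount_swap_mul_of_sameCycle [Finite β] (hxy : x ≠ y) (h : σ.SameCycle x y) :
    cycleCount (swap x y * σ) = cycleCount σ + 1 := by
  have hle := sameCycleSetoid_le_of_forall (h.sameCycle_swap_mul_apply)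
  refine le_antisymm (Setoid.card_quotient_le_card_quotient_add_one hle y fun u v huv hu hv => ?_)
    (Setoid.card_quotient_lt_of_le hle h (not_sameCycle_swap_mul_of_sameCycle hxy h))
  rw [← swap_mul_self_mul x y σ] at huv
  by_cases hux : (swap x y * σ).SameCycle u x
  · by_cases hvx : (swap x y * σ).SameCycle v x
    · exact hux.trans hvx.symm
    · exact (SameCycle.of_swap_mul hvx hv huv.symm).symm
  · exact SameCycle.of_swap_mul hux hu huv

theorem cycleCount_swap_mul_le [Finite β] (σ : Perm β) (x y : β) :
    cycleCount (swap x y * σ) ≤ cycleCount σ + 1 := by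
  by_cases h : σ.SameCycle x y
  · rcases eq_or_ne x y with rfl | hxy
    · rw [swap_self, ← one_def, one_mul]
      exact Nat.le_succ _
    · exact (cycleCount_swap_mul_of_sameCycle hxy h).le
  · exact (cycleCount_swap_mul_lt h).le.trans (Nat.le_succ _)

end Equiv.Perm

theorem Finset.card_sdiff_pair_add_two {α : Type*} [DecidableEq α] {S : Finset α} {x y : α}
    (hx : x ∈ S) (hy : y ∈ S) (hxy : x ≠ y) : #(S \ {x, y}) + 2 = #S := by
  rw [← card_pair hxy]
  exact card_sdiff_add_card_eq_card (insert_subset hx (singleton_subset_iff.2 hy))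

section Chords

variable {β : Type*} [DecidableEq β] {τ : Perm β}

def chordsWithin (hτ : Involutive τ) (S : Finset β) : Perm β :=
  Involutive.toPerm (fun z => if z ∈ S ∧ τ z ∈ S then τ z else z) fun z => by
    by_cases hz : z ∈ S ∧ τ z ∈ S
    · simp [hz, hτ z]
    · simp [hz]

variable (hτ : Involutive τ)

theorem chordsWithin_apply (S : Finset β) (z : β) :
    chordsWithin hτ S z = if z ∈ S ∧ τ z ∈ S then τ z else z := rfl

theorem chordsWithin_univ [Fintype β] : chordsWithin hτ univ = τ := by
  ext z
  simp [chordsWithin_apply]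

theorem chordsWithin_eq_one {S : Finset β} (hS : ∀ z ∈ S, τ z ∈ S → τ z = z) :
    chordsWithin hτ S = 1 := by
  ext z
  rw [chordsWithin_apply]
  split_ifs with hz
  exacts [hS z hz.1 hz.2, rfl]

theorem chordsWithin_eq_swap_mul {S : Finset β} {x : β} (hx : x ∈ S) (hτx : τ x ∈ S) :
    chordsWithin hτ S = swap x (τ x) * chordsWithin hτ (S \ {x, τ x}) := by
  ext z
  have := hτ z
  have := hτ x
  simp only [Perm.mul_apply, chordsWithin_apply, swap_apply_def, mem_sdiff, mem_insert,
    mem_singleton]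
  split_ifs <;> grind

theorem chordsWithin_eq_mul_swap {S : Finset β} {x : β} (hx : x ∈ S) (hτx : τ x ∈ S) :
    chordsWithin hτ S = chordsWithin hτ (S \ {x, τ x}) * swap x (τ x) := by
  ext z
  have := hτ z
  have := hτ x
  simp only [Perm.mul_apply, chordsWithin_apply, swap_apply_def, mem_sdiff, mem_insert,
    mem_singleton]
  split_ifs <;> grind

theorem two_mul_cycleCount_chordsWithin_mul_le [Finite β] (σ : Perm β)
    (S : Finset β) : 2 * cycleCount (chordsWithin hτ S * σ) ≤ 2 * cycleCount σ + #S := by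
  induction S using Finset.strongInduction with
  | H S ih =>
  by_cases h : ∃ x ∈ S, τ x ∈ S ∧ τ x ≠ x
  · obtain ⟨x, hx, hτx, hne⟩ := h
    have hcard := card_sdiff_pair_add_two hx hτx hne.symm
    have hS' := ih _ (sdiff_ssubset (insert_subset hx (singleton_subset_iff.2 hτx)) (by simp))
    have hswap := Perm.cycleCount_swap_mul_le (chordsWithin hτ (S \ {x, τ x}) * σ) x (τ x)
    rw [chordsWithin_eq_swap_mul hτ hx hτx, mul_assoc]
    omega
  · push Not at h
    rw [chordsWithin_eq_one hτ h, one_mul]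
    omega

end Chords

section Circle

variable {N : ℕ} {τ : Perm (ZMod N)} {a z : ZMod N}

theorem StrictlyInsideArc.ne_left (h : StrictlyInsideArc τ a z) : z ≠ a := by
  rintro rfl
  simp [StrictlyInsideArc] at h

theorem StrictlyInsideArc.ne_right (h : StrictlyInsideArc τ a z) : z ≠ τ a := by
  rintro rfl
  exact h.2.false

theorem StrictlyInsideArc.apply_ne (h : StrictlyInsideArc τ a z) : τ a ≠ a := by
  intro ha
  have := h.2
  simp [ha] at this

theorem LinkedAt.apply_left_ne {b : ZMod N} (h : LinkedAt τ a b) : τ a ≠ a := by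
  rcases h.2.2.2.2 with ⟨h, -⟩ | ⟨h, -⟩ <;> exact h.apply_ne

theorem LinkedAt.apply_right_ne {b : ZMod N} (h : LinkedAt τ a b) : τ b ≠ b := by
  intro hb
  have hxor := h.2.2.2.2
  rw [hb] at hxor
  exact (xor_iff_not_iff _ _).1 hxor Iff.rfl

theorem strictlyInsideArc_iff_of_not_linkedAt {b : ZMod N} (h : ¬LinkedAt τ a b) (h₁ : b ≠ a)
    (h₂ : b ≠ τ a) (h₃ : τ b ≠ a) (h₄ : τ b ≠ τ a) :
    StrictlyInsideArc τ a b ↔ StrictlyInsideArc τ a (τ b) :=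
  not_not.1 fun hb => h ⟨h₁, h₂, h₃, h₄, (xor_iff_not_iff _ _).2 hb⟩

variable [NeZero N]

theorem sameCycle_addRight_one (i j : ZMod N) : (Equiv.addRight (1 : ZMod N)).SameCycle i j :=
  ⟨(j - i).val, by simp⟩

theorem cycleCount_addRight_one : cycleCount (Equiv.addRight (1 : ZMod N)) = 1 := by
  rw [cycleCount, Nat.card_eq_one_iff_unique]
  exact ⟨⟨Quotient.ind₂ fun i j => Quotient.sound (sameCycle_addRight_one i j)⟩, ⟨⟦0⟧⟩⟩

theorem StrictlyInsideArc.add_one (hτa : τ a ≠ a)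
    (hz : z = a ∨ StrictlyInsideArc τ a z) : z + 1 = τ a ∨ StrictlyInsideArc τ a (z + 1) := by
  have hd : 0 < (τ a - a).val := ZMod.val_pos.2 (sub_ne_zero.2 hτa)
  have hdN : (τ a - a).val < N := ZMod.val_lt _
  have hz' : (z - a).val < (τ a - a).val := by
    rcases hz with rfl | hz
    · simpa using hd
    · exact hz.2
  have hstep : (z + 1 - a).val = (z - a).val + 1 := by
    rw [add_sub_right_comm, ZMod.val_add_of_lt] <;> rw [ZMod.val_one'' (by omega)]
    omega
  rcases (Nat.succ_le_of_lt hz').eq_or_lt with heq | hlt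
  · left
    exact sub_left_injective (ZMod.val_injective N (hstep.trans heq))
  · exact Or.inr ⟨by omega, by omega⟩

/-- No chord of `ρ` crosses the arc from `a` to `τ a`, so the surgery circle leaving `a` stays
on that arc until it reaches `τ a`. -/
theorem sameCycle_mul_addRight_of_forall {ρ : Perm (ZMod N)} (hρ : ρ (τ a) = τ a)
    (h : ∀ z, ρ z ≠ z → (StrictlyInsideArc τ a z ↔ StrictlyInsideArc τ a (ρ z))) :
    (ρ * Equiv.addRight (1 : ZMod N)).SameCycle a (τ a) := by
  rcases eq_or_ne (τ a) a with hτa | hτa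
  · rw [hτa]
  set σ := ρ * Equiv.addRight (1 : ZMod N)
  let S := {z | StrictlyInsideArc τ a z ∨ σ.SameCycle z (τ a)}
  have hstep : ∀ z, z = a ∨ StrictlyInsideArc τ a z → σ z ∈ S := by
    intro z hz
    show StrictlyInsideArc τ a (ρ (z + 1)) ∨ σ.SameCycle (ρ (z + 1)) (τ a)
    rcases StrictlyInsideArc.add_one hτa hz with h1 | h1
    · rw [h1, hρ]
      exact Or.inr (.refl _ _)
    · by_cases hfix : ρ (z + 1) = z + 1
      · rw [hfix]
        exact Or.inl h1
      · exact Or.inl ((h _ hfix).1 h1)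
  have hS : Set.MapsTo σ S S := by
    rintro z (hz | hz)
    · exact hstep z (Or.inr hz)
    · exact Or.inr (Perm.sameCycle_apply_left.2 hz)
  have haσa : σ.SameCycle (σ a) a := Perm.sameCycle_apply_left.2 (.refl _ _)
  exact (haσa.mem_of_mapsTo hS (hstep a (Or.inl rfl))).resolve_left fun ha => ha.ne_left rfl

/-- The arc from `a` to `τ a`, without `τ a`, is invariant under surgery along `{a, τ a}`. -/
theorem LinkedAt.not_sameCycle_swap_mul_addRight {b : ZMod N} (hL : LinkedAt τ a b) :
    ¬(swap a (τ a) * Equiv.addRight (1 : ZMod N)).SameCycle b (τ b) := by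
  have hτa := hL.apply_left_ne
  obtain ⟨hba, -, hτba, -, hxor⟩ := hL
  let S := {z | z = a ∨ StrictlyInsideArc τ a z}
  have hS : Set.MapsTo (swap a (τ a) * Equiv.addRight (1 : ZMod N)) S S := by
    intro z hz
    show swap a (τ a) (z + 1) ∈ S
    rcases StrictlyInsideArc.add_one hτa hz with h1 | h1
    · rw [h1, swap_apply_right]
      exact Or.inl rfl
    · rw [swap_apply_of_ne_of_ne h1.ne_left h1.ne_right]
      exact Or.inr h1
  intro hc
  rcases hxor with ⟨hb, hτb⟩ | ⟨hτb, hb⟩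
  · rcases hc.mem_of_mapsTo hS (Or.inr hb) with h | h
    exacts [hτba h, hτb h]
  · rcases hc.symm.mem_of_mapsTo hS (Or.inr hτb) with h | h
    exacts [hba h, hb h]

end Circle

section ChordDiagram

variable {N : ℕ} [NeZero N] {τ : Perm (ZMod N)}

theorem two_mul_cycleCount_chordsWithin_mul_addRight (hτ : Involutive τ) (hfp : ∀ i, τ i ≠ i)
    (H : ∀ a b, ¬LinkedAt τ a b) (S : Finset (ZMod N)) (hS : ∀ z ∈ S, τ z ∈ S) :
    2 * cycleCount (chordsWithin hτ S * Equiv.addRight 1) = #S + 2 := by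
  induction S using Finset.strongInduction with
  | H S ih =>
  rcases S.eq_empty_or_nonempty with rfl | ⟨x, hx⟩
  · rw [chordsWithin_eq_one hτ (by simp), one_mul, cycleCount_addRight_one, card_empty]
  have hτx := hS x hx
  set S' := S \ {x, τ x}
  have hS' : ∀ z ∈ S', τ z ∈ S' := by
    intro z hz
    simp only [S', mem_sdiff, mem_insert, mem_singleton, not_or] at hz ⊢
    refine ⟨hS z hz.1, fun h => hz.2.2 ?_, fun h => hz.2.1 (hτ.injective h)⟩
    rw [← h, hτ z]
  have hsc : (chordsWithin hτ S' * Equiv.addRight 1).SameCycle x (τ x) := by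
    refine sameCycle_mul_addRight_of_forall ?_ fun z hz => ?_
    · rw [chordsWithin_apply, if_neg (by simp [S'])]
    · have hmem : z ∈ S' ∧ τ z ∈ S' := by
        by_contra h
        exact hz (by rw [chordsWithin_apply, if_neg h])
      rw [chordsWithin_apply, if_pos hmem]
      simp only [S', mem_sdiff, mem_insert, mem_singleton, not_or] at hmem
      exact strictlyInsideArc_iff_of_not_linkedAt (H x z) hmem.1.2.1 hmem.1.2.2 hmem.2.2.1
        hmem.2.2.2
  have hcard : #S' + 2 = #S := card_sdiff_pair_add_two hx hτx (hfp x).symm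
  have hS'lt : S' ⊂ S := sdiff_ssubset (insert_subset hx (singleton_subset_iff.2 hτx)) (by simp)
  rw [chordsWithin_eq_swap_mul hτ hx hτx, mul_assoc,
    Perm.cycleCount_swap_mul_of_sameCycle (hfp x).symm hsc, mul_add, ih S' hS'lt hS']
  omega

theorem LinkedAt.two_mul_cycleCount_mul_addRight_add_two_le (hτ : Involutive τ) {a b : ZMod N}
    (hL : LinkedAt τ a b) : 2 * cycleCount (τ * Equiv.addRight 1) + 2 ≤ N := by
  set A := univ \ {a, τ a}
  have hb : b ∈ A := by simp [A, hL.1, hL.2.1]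
  have hτb : τ b ∈ A := by simp [A, hL.2.2.1, hL.2.2.2.1]
  have hτ_eq : τ = chordsWithin hτ (A \ {b, τ b}) * swap b (τ b) * swap a (τ a) := by
    rw [← chordsWithin_eq_mul_swap hτ hb hτb,
      ← chordsWithin_eq_mul_swap hτ (mem_univ a) (mem_univ _), chordsWithin_univ]
  have hcard : #(A \ {b, τ b}) + 4 = N := by
    have hA : #A + 2 = N := by
      have := card_sdiff_pair_add_two (mem_univ a) (mem_univ (τ a)) hL.apply_left_ne.symm
      rwa [card_univ, ZMod.card] at this
    have := card_sdiff_pair_add_two hb hτb hL.apply_right_ne.symm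
    omega
  have h₁ := Perm.cycleCount_swap_mul_le (Equiv.addRight (1 : ZMod N)) a (τ a)
  have h₂ := Perm.cycleCount_swap_mul_lt hL.not_sameCycle_swap_mul_addRight
  have h₃ := two_mul_cycleCount_chordsWithin_mul_le hτ
    (swap b (τ b) * (swap a (τ a) * Equiv.addRight 1)) (A \ {b, τ b})
  rw [cycleCount_addRight_one] at h₁
  rw [hτ_eq, mul_assoc, mul_assoc]
  omega

end ChordDiagram

theorem interMatrix_eq_zero_iff {N : ℕ} {τ : Perm (ZMod N)} :
    interMatrix τ = 0 ↔ ∀ a b, ¬LinkedAt τ a b := by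
  simp [← Matrix.ext_iff, interMatrix]

/-- For a chord diagram with `n` chords, modelled as a fixed-point-free involution `τ`
of `ZMod (2*n)`, the surgery permutation `p i = τ (i+1)` has exactly `n + 1` cycles
if and only if no two chords are linked, equivalently if and only if the
interlacement matrix is the zero matrix. -/
theorem surgery_max_circles_iff_unlinked (n : ℕ) [NeZero n]
    (τ : Equiv.Perm (ZMod (2 * n)))
    (hinv : Function.Involutive τ) (hfp : ∀ i, τ i ≠ i) :
    (cycleCount (τ * Equiv.addRight (1 : ZMod (2 * n))) = n + 1 ↔
      ∀ a b : ZMod (2 * n), ¬ LinkedAt τ a b) ∧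
    (cycleCount (τ * Equiv.addRight (1 : ZMod (2 * n))) = n + 1 ↔
      interMatrix τ = 0) := by
  have : NeZero (2 * n) := ⟨mul_ne_zero two_ne_zero (NeZero.ne n)⟩
  have hiff : cycleCount (τ * Equiv.addRight (1 : ZMod (2 * n))) = n + 1 ↔
      ∀ a b : ZMod (2 * n), ¬ LinkedAt τ a b := by
    refine ⟨fun h a b hL => ?_, fun H => ?_⟩
    · have := hL.two_mul_cycleCount_mul_addRight_add_two_le hinv
      omega
    · have := two_mul_cycleCount_chordsWithin_mul_addRight hinv hfp H univ fun z _ => mem_univ _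
      rw [chordsWithin_univ, card_univ, ZMod.card] at this
      omega
  exact ⟨hiff, hiff.trans interMatrix_eq_zero_iff.symm⟩
end

section
/- Let D be a finite type, let σ and α be permutations of D with α a fixed-point-free involution. Then the following are equivalent: (1) there exists f : D → Bool such that f(α d) ≠ f(d) and f(σ d) ≠ f(d) for all d ∈ D (the source-sink condition); (2) there exists col : D → Bool such that col(σ(α d)) = col(d) for all d (col is constant on faces) and col(α d) ≠ col(d) for all d (faces sharing an edge get different colors), i.e., the rotation system admits a checkerboard face 2-coloring. -/
/-! Take the same `Bool`-labelling of darts on both sides. An alternating labelling flips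
along `α` and along `σ`, so it is invariant under `σ ∘ α`, i.e. constant on faces.
Conversely, since `α` is an involution, `σ d = σ (α (α d))` lies in the face of `α d`,
so a checkerboard colouring flips along `σ` as well. -/

section RotationSystem

variable {D : Type*} {σ α : D → D}

theorem apply_apply_eq_of_alternating {f : D → Bool} (hα : ∀ d, f (α d) ≠ f d)
    (hσ : ∀ d, f (σ d) ≠ f d) (d : D) : f (σ (α d)) = f d := by
  rw [Bool.eq_not_iff.mpr (hσ (α d)), Bool.eq_not_iff.mpr (hα d), Bool.not_not]

theorem apply_ne_of_checkerboard {col : D → Bool} (hinv : Function.Involutive α)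
    (hface : ∀ d, col (σ (α d)) = col d) (hedge : ∀ d, col (α d) ≠ col d) (d : D) :
    col (σ d) ≠ col d := by
  have hσ_face : col (σ d) = col (α d) := by simpa only [hinv d] using hface (α d)
  exact hσ_face ▸ hedge d

end RotationSystem

theorem sourceSink_iff_checkerboard_general {D : Type*}
    (σ α : Equiv.Perm D) (hinv : Function.Involutive α) :
    (∃ f : D → Bool, ∀ d, f (α d) ≠ f d ∧ f (σ d) ≠ f d) ↔
    (∃ col : D → Bool, (∀ d, col (σ (α d)) = col d) ∧ (∀ d, col (α d) ≠ col d)) := by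
  constructor
  · rintro ⟨f, hf⟩
    exact ⟨f, apply_apply_eq_of_alternating (fun d => (hf d).1) (fun d => (hf d).2),
      fun d => (hf d).1⟩
  · rintro ⟨col, hface, hedge⟩
    exact ⟨col, fun d => ⟨hedge d, apply_ne_of_checkerboard hinv hface hedge d⟩⟩

/-- **Source-sink condition ⇔ checkerboard colorability.**
Let `(D, σ, α)` be a rotation system: `D` a finite set of darts, `σ` a permutation
whose orbits are the vertices (cyclic order of darts around each vertex), `α` a
fixed-point-free involution whose orbits are the edges. The faces are the orbits of
`σ ∘ α`, and the darts `d` and `α d` lie in the two faces adjacent along their edge.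
Then the source-sink condition (an alternating in/out orientation of darts, i.e.
`f : D → Bool` with `f ∘ α = not ∘ f` and `f ∘ σ = not ∘ f`) holds if and only if
the faces admit a checkerboard 2-coloring (a `col : D → Bool` constant on faces with
faces sharing an edge having different colors). -/
theorem sourceSink_iff_checkerboard {D : Type*} [Fintype D]
    (σ α : Equiv.Perm D) (hinv : Function.Involutive α) (hfp : ∀ d, α d ≠ d) :
    (∃ f : D → Bool, ∀ d, f (α d) ≠ f d ∧ f (σ d) ≠ f d) ↔
    (∃ col : D → Bool, (∀ d, col (σ (α d)) = col d) ∧ (∀ d, col (α d) ≠ col d)) :=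
  sourceSink_iff_checkerboard_general σ α hinv
end

section
/- Let D be a finite type, let σ and α be permutations of D with α a fixed-point-free involution, and suppose the subgroup of permutations generated by σ and α acts transitively on D (the graph is connected). Define the double cover on D × ZMod 2 by σ'(d, i) = (σ d, i+1) and α'(d, i) = (α d, i+1). Then: (a) α' is a fixed-point-free involution, and the function f(d, i) = (i = 0) satisfies f(α'(x)) ≠ f(x) and f(σ'(x)) ≠ f(x) for all x, so the double cover satisfies the source-sink condition; and (b) if no function g : D → Bool satisfies g(α d) ≠ g(d) and g(σ d) ≠ g(d) for all d ∈ D (i.e., the original does not satisfy the source-sink condition), then the subgroup generated by σ' and α' acts transitively on D × ZMod 2 (the double cover is connected). -/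
/-!
The deck transformation `(d, i) ↦ (d, i + 1)` commutes with the lifted generators, so it
permutes the orbits of the lifted group; and the projection of an orbit to `D` is invariant
under the generators of the transitive base group, so every orbit meets every fibre. Hence an orbit either contains a whole fibre, and then
everything, or meets each fibre `{(d, 0), (d, 1)}` exactly once. In the latter case
`d ↦ ((d, 0) ∈ orbit)` is flipped by every generator, i.e. it is a source-sink orientation
of `D`.
-/

open Equiv MulAction Subgroup
open scoped Pointwise

section Orbits

variable {X : Type*}

lemma mem_orbit_subgroup_perm_iff {H : Subgroup (Perm X)} {x y : X} :
    y ∈ orbit H x ↔ ∃ g ∈ H, g x = y := by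
  simp [mem_orbit_iff, Subgroup.smul_def, Perm.smul_def]

lemma isPretransitive_subgroup_perm_iff {H : Subgroup (Perm X)} :
    IsPretransitive H X ↔ ∀ x y : X, ∃ g ∈ H, g x = y := by
  simp only [isPretransitive_iff, ← mem_orbit_subgroup_perm_iff, mem_orbit_iff]

lemma orbit_closure_subset_image_orbit {Y : Type*} {π : X → Y} {S : Set (Perm Y)}
    {H : Subgroup (Perm X)} (hS : ∀ p ∈ S, ∃ p' ∈ H, Function.Semiconj π p' p) (x : X) :
    orbit (closure S) (π x) ⊆ π '' orbit H x := by
  set s := π '' orbit H x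
  have hmaps : ∀ q : Perm Y, ∀ q' ∈ H, Function.Semiconj π q' q → ∀ y ∈ s, q y ∈ s := by
    rintro q q' hq' hq _ ⟨z, hz, rfl⟩
    exact ⟨q' z, mem_orbit_of_mem_orbit ⟨q', hq'⟩ hz, hq z⟩
  have hstab : closure S ≤ stabilizer (Perm Y) s := by
    refine closure_le _ |>.2 fun p hp => ?_
    obtain ⟨p', hp'H, hp'⟩ := hS p hp
    have hinv : Function.Semiconj π ⇑p'⁻¹ ⇑p⁻¹ :=
      hp'.inverses_right p'.apply_symm_apply p.symm_apply_apply
    refine Set.Subset.antisymm (Set.smul_set_subset_iff.2 (hmaps p p' hp'H hp')) ?_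
    exact Set.subset_smul_set_iff.2 <| Set.smul_set_subset_iff.2 (hmaps _ _ (inv_mem hp'H) hinv)
  rintro _ ⟨⟨g, hg⟩, rfl⟩
  have := Set.smul_mem_smul_set (a := g) (Set.mem_image_of_mem π (mem_orbit_self (M := H) x))
  rwa [hstab hg] at this

lemma apply_mem_orbit_iff_of_mem {H : Subgroup (Perm X)} {g : Perm X} (hg : g ∈ H) {x z : X} :
    g z ∈ orbit H x ↔ z ∈ orbit H x := by
  rw [← orbit_eq_iff, ← orbit_eq_iff]
  exact iff_of_eq (congrArg (· = _) (orbit_smul (⟨g, hg⟩ : H) z))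

lemma apply_mem_orbit_iff_of_le_centralizer {H : Subgroup (Perm X)} {τ : Perm X}
    (hτ : H ≤ centralizer {τ}) {x z : X} (hz : z ∈ orbit H x) :
    τ z ∈ orbit H x ↔ τ x ∈ orbit H x := by
  obtain ⟨g, rfl⟩ := hz
  have hcomm : τ (g • x) = g • τ x :=
    (congrArg (· x) (mem_centralizer_singleton_iff.1 (hτ g.2))).symm
  rw [hcomm, ← orbit_eq_iff, orbit_smul, orbit_eq_iff]

end Orbits

def IsSourceSink {Y : Type*} (S : Set (Perm Y)) (f : Y → Bool) : Prop :=
  ∀ p ∈ S, ∀ y, f (p y) ≠ f y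

namespace DoubleCover

variable {D : Type*}

def lift (p : Perm D) : Perm (D × ZMod 2) := p.prodCongr (Equiv.addRight 1)

@[simp] lemma lift_apply (p : Perm D) (x : D × ZMod 2) : lift p x = (p x.1, x.2 + 1) := rfl

lemma involutive_lift {p : Perm D} (hp : Function.Involutive p) :
    Function.Involutive (lift p) := by
  intro x
  simp [hp x.1, add_assoc, CharTwo.add_self_eq_zero]

lemma lift_apply_ne {p : Perm D} (hp : ∀ d, p d ≠ d) (x : D × ZMod 2) : lift p x ≠ x :=
  fun h => hp x.1 (congrArg Prod.fst h)

lemma isSourceSink_lift (S : Set (Perm D)) :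
    IsSourceSink (lift '' S) (fun x => decide (x.2 = 0)) := by
  rintro _ ⟨p, -, rfl⟩ x
  have hflip : ∀ i : ZMod 2, decide (i + 1 = 0) ≠ decide (i = 0) := by decide
  exact hflip x.2

lemma commute_lift_one_lift (p : Perm D) : Commute (lift 1) (lift p) := by
  ext x <;> simp

lemma closure_image_lift_le_centralizer (S : Set (Perm D)) :
    closure (lift '' S) ≤ centralizer {lift 1} := by
  refine closure_le _ |>.2 ?_
  rintro _ ⟨p, -, rfl⟩
  exact mem_centralizer_singleton_iff.2 (commute_lift_one_lift p)

lemma exists_mem_orbit_closure_image_lift (S : Set (Perm D)) [IsPretransitive (closure S) D]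
    (x : D × ZMod 2) (d : D) : ∃ i, (d, i) ∈ orbit (closure (lift '' S)) x := by
  have hsub := orbit_closure_subset_image_orbit (π := Prod.fst) (S := S)
    (H := closure (lift '' S)) (fun p hp => ⟨lift p, subset_closure ⟨p, hp, rfl⟩, fun _ => rfl⟩) x
  obtain ⟨⟨_, i⟩, hi, rfl⟩ := hsub (orbit_eq_univ (closure S) x.1 ▸ Set.mem_univ d)
  exact ⟨i, hi⟩

theorem exists_isSourceSink_of_lift_one_notMem_orbit (S : Set (Perm D))
    [IsPretransitive (closure S) D] {x : D × ZMod 2}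
    (hx : lift 1 x ∉ orbit (closure (lift '' S)) x) : ∃ f, IsSourceSink S f := by
  classical
  set O := orbit (closure (lift '' S)) x
  have hτ := closure_image_lift_le_centralizer S
  have hfibre : ∀ d, (d, 1) ∈ O ↔ (d, 0) ∉ O := by
    intro d
    refine ⟨fun h1 h0 => hx ?_, fun h0 => ?_⟩
    · exact (apply_mem_orbit_iff_of_le_centralizer hτ h0).1 h1
    · obtain ⟨i, hi⟩ := exists_mem_orbit_closure_image_lift S x d
      fin_cases i
      exacts [absurd hi h0, hi]
  refine ⟨fun d => decide ((d, 0) ∈ O), fun p hp d => ?_⟩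
  have hp' : (p d, 0) ∈ O ↔ (d, 1) ∈ O :=
    apply_mem_orbit_iff_of_mem (subset_closure (Set.mem_image_of_mem lift hp)) (z := (d, 1))
  simp [hp', hfibre]

theorem isPretransitive_closure_image_lift (S : Set (Perm D)) [IsPretransitive (closure S) D]
    (hS : ¬ ∃ f, IsSourceSink S f) :
    IsPretransitive (closure (lift '' S)) (D × ZMod 2) := by
  refine ⟨fun x ⟨d, j⟩ => mem_orbit_iff.1 ?_⟩
  have hx : lift 1 x ∈ orbit (closure (lift '' S)) x :=
    not_not.1 fun hx => hS (exists_isSourceSink_of_lift_one_notMem_orbit S hx)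
  obtain ⟨i, hi⟩ := exists_mem_orbit_closure_image_lift S x d
  obtain rfl | rfl : j = i ∨ j = i + 1 := by clear hi; revert i j; decide
  exacts [hi, (apply_mem_orbit_iff_of_le_centralizer (closure_image_lift_le_centralizer S) hi).2 hx]

end DoubleCover

open DoubleCover in
theorem doubleCover_sourceSink_general {D : Type*}
    (σ α : Equiv.Perm D) (hinv : Function.Involutive α) (hfp : ∀ d, α d ≠ d)
    (htrans : ∀ x y : D, ∃ g ∈ Subgroup.closure ({σ, α} : Set (Equiv.Perm D)), g x = y)
    (σ' α' : Equiv.Perm (D × ZMod 2))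
    (hσ' : ∀ x : D × ZMod 2, σ' x = (σ x.1, x.2 + 1))
    (hα' : ∀ x : D × ZMod 2, α' x = (α x.1, x.2 + 1)) :
    (Function.Involutive α' ∧ (∀ x, α' x ≠ x) ∧
      (∀ x : D × ZMod 2,
        (decide ((α' x).2 = 0) ≠ decide (x.2 = 0)) ∧
        (decide ((σ' x).2 = 0) ≠ decide (x.2 = 0)))) ∧
    ((¬ ∃ g : D → Bool, ∀ d, g (α d) ≠ g d ∧ g (σ d) ≠ g d) →
      ∀ x y : D × ZMod 2,
        ∃ g ∈ Subgroup.closure ({σ', α'} : Set (Equiv.Perm (D × ZMod 2))), g x = y) := by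
  obtain rfl : σ' = lift σ := Equiv.ext hσ'
  obtain rfl : α' = lift α := Equiv.ext hα'
  have hlifts : ({lift σ, lift α} : Set (Perm (D × ZMod 2))) = lift '' {σ, α} :=
    (Set.image_pair lift σ α).symm
  have hsource := isSourceSink_lift ({σ, α} : Set (Perm D))
  rw [← hlifts] at hsource
  refine ⟨⟨involutive_lift hinv, lift_apply_ne hfp,
    fun x => ⟨hsource _ (by simp) x, hsource _ (by simp) x⟩⟩, fun hS => ?_⟩
  have : IsPretransitive (closure {σ, α}) D := isPretransitive_subgroup_perm_iff.2 htrans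
  rw [hlifts, ← isPretransitive_subgroup_perm_iff]
  refine isPretransitive_closure_image_lift _ fun ⟨f, hf⟩ => hS ⟨f, fun d => ?_⟩
  exact ⟨hf α (by simp) d, hf σ (by simp) d⟩

/-- **The source-sink double cover.** Let `(D, σ, α)` be a connected rotation system:
`σ` a permutation of the finite dart set `D` (orbits = vertices), `α` a
fixed-point-free involution (orbits = edges), with the subgroup generated by `σ` and
`α` acting transitively on `D`. Define the double cover on `D × ZMod 2` by
`σ' (d, i) = (σ d, i + 1)` and `α' (d, i) = (α d, i + 1)`. Then:
(a) `α'` is a fixed-point-free involution and `f (d, i) = (i = 0)` witnesses the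
source-sink condition for the double cover; and
(b) if the original rotation system does not satisfy the source-sink condition, then
the subgroup generated by `σ'` and `α'` acts transitively on `D × ZMod 2`. -/
theorem doubleCover_sourceSink {D : Type*} [Fintype D]
    (σ α : Equiv.Perm D) (hinv : Function.Involutive α) (hfp : ∀ d, α d ≠ d)
    (htrans : ∀ x y : D, ∃ g ∈ Subgroup.closure ({σ, α} : Set (Equiv.Perm D)), g x = y)
    (σ' α' : Equiv.Perm (D × ZMod 2))
    (hσ' : ∀ x : D × ZMod 2, σ' x = (σ x.1, x.2 + 1))
    (hα' : ∀ x : D × ZMod 2, α' x = (α x.1, x.2 + 1)) :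
    (Function.Involutive α' ∧ (∀ x, α' x ≠ x) ∧
      (∀ x : D × ZMod 2,
        (decide ((α' x).2 = 0) ≠ decide (x.2 = 0)) ∧
        (decide ((σ' x).2 = 0) ≠ decide (x.2 = 0)))) ∧
    ((¬ ∃ g : D → Bool, ∀ d, g (α d) ≠ g d ∧ g (σ d) ≠ g d) →
      ∀ x y : D × ZMod 2,
        ∃ g ∈ Subgroup.closure ({σ', α'} : Set (Equiv.Perm (D × ZMod 2))), g x = y) :=
  doubleCover_sourceSink_general σ α hinv hfp htrans σ' α' hσ' hα'
end
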